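/- arXiv:2107.12722 — 2 statements merged into one kernel-verified Lean document; each statement's English description precedes it below -/
import Mathlib

section
/- Let κ be an uncountable regular cardinal, ν < κ, λ ≥ κ with λ^ν = λ and μ^ν < κ for all μ < κ, and let F be a normal filter on P_κ(λ) containing Cl_κ(f) for every f : (ν → λ) → λ. Then the class of F-layered partial orders of size at most λ is closed under products of two factors: if P and Q have size at most λ and are F-layered, so is P × Q. -/
open Cardinal

universe u

variable {P : Type u} [PartialOrder P]

/-- Two conditions are compatible if they have a common lower bound. -/
def Compat (p q : P) : Prop := ∃ r, r ≤ p ∧ r ≤ q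

/-- Compatibility within a suborder `Q`: a common lower bound lying in `Q`. -/
def CompatIn (Q : Set P) (p q : P) : Prop := ∃ r ∈ Q, r ≤ p ∧ r ≤ q

/-- `A` is an antichain of the suborder `Q`. -/
def IsAntichainIn (Q A : Set P) : Prop :=
  A ⊆ Q ∧ ∀ p ∈ A, ∀ q ∈ A, p ≠ q → ¬ CompatIn Q p q

/-- `A` is a maximal antichain of the suborder `Q`. -/
def IsMaxAntichainIn (Q A : Set P) : Prop :=
  IsAntichainIn Q A ∧ ∀ q ∈ Q, ∃ a ∈ A, CompatIn Q q a

/-- `Q` is a regular suborder of `P`. -/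
def IsRegularSuborder (Q : Set P) : Prop :=
  (∀ p ∈ Q, ∀ q ∈ Q, ¬ CompatIn Q p q → ¬ Compat p q) ∧
    ∀ A : Set P, IsMaxAntichainIn Q A → IsMaxAntichainIn Set.univ A

/-- `P` satisfies the `κ`-chain condition. -/
def CCC (P : Type u) [PartialOrder P] (κ : Cardinal.{u}) : Prop :=
  ∀ A : Set P, IsAntichainIn Set.univ A → #A < κ

/-- `P_κ(λ)`: the subsets of (a type representing) `λ` of cardinality less than `κ`. -/
def Pklt (κ : Cardinal.{u}) (L : Type u) : Set (Set L) := {a | #a < κ}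

/-- `F` is a filter on `P_κ(λ)`. -/
structure IsSetFilter (κ : Cardinal.{u}) (L : Type u) (F : Set (Set (Set L))) : Prop where
  sub : ∀ A ∈ F, A ⊆ Pklt κ L
  top : Pklt κ L ∈ F
  empty_not : ∅ ∉ F
  superset : ∀ A ∈ F, ∀ B ⊆ Pklt κ L, A ⊆ B → B ∈ F
  inter : ∀ A ∈ F, ∀ B ∈ F, A ∩ B ∈ F

/-- `F` is a normal filter on `P_κ(λ)`. -/
structure IsNormalSetFilter (κ : Cardinal.{u}) (L : Type u) (F : Set (Set (Set L)))
    extends IsSetFilter κ L F : Prop where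
  diag : ∀ Aseq : L → Set (Set L), (∀ x, Aseq x ∈ F) →
    {a ∈ Pklt κ L | ∀ x ∈ a, a ∈ Aseq x} ∈ F
  fine : ∀ x : L, {a ∈ Pklt κ L | x ∈ a} ∈ F

/-- `P` (of size at most `λ`) is `F`-layered: for every surjection `s : λ → P`, the set
of `a ∈ P_κ(λ)` such that `s[a]` is a regular suborder of `P` of size `< κ` belongs
to `F`. -/
def FLayered (κ : Cardinal.{u}) {L : Type u} (F : Set (Set (Set L)))
    (P : Type u) [PartialOrder P] : Prop :=
  ∀ s : L → P, Function.Surjective s →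
    {a ∈ Pklt κ L | IsRegularSuborder (s '' a) ∧ #(s '' a) < κ} ∈ F

/-- `Cl_κ(f)`: the elements of `P_κ(λ)` closed under `f`, where `ν` is represented by
the type `V`. -/
def ClSet {V L : Type u} (κ : Cardinal.{u}) (f : (V → L) → L) : Set (Set L) :=
  {a | #a < κ ∧ ∀ s : V → L, Set.range s ⊆ a → f s ∈ a}

section Aux

theorem compatIn_trans_le {A : Set P} {p p' q : P} (h : p' ≤ p) (hc : CompatIn A p' q) :
    CompatIn A p q := by
  obtain ⟨r, hr, h1, h2⟩ := hc
  exact ⟨r, hr, h1.trans h, h2⟩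

/-- Every element of the ambient order has a "reduct" to a regular suborder. -/
theorem exists_reduct {A : Set P} (hA : IsRegularSuborder A) (p : P) :
    ∃ r ∈ A, ∀ q ∈ A, q ≤ r → Compat q p := by
  by_contra hcon
  push_neg at hcon
  -- hcon : ∀ r ∈ A, ∃ q ∈ A, q ≤ r ∧ ¬ Compat q p
  set D : Set P := {q | q ∈ A ∧ ¬ Compat q p} with hD
  set S : Set (Set P) :=
    {M | M ⊆ D ∧ ∀ x ∈ M, ∀ y ∈ M, x ≠ y → ¬ CompatIn A x y} with hS
  obtain ⟨M, hMS, hMmax⟩ : ∃ M, Maximal (· ∈ S) M := by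
    apply zorn_subset
    intro c hc hchain
    refine ⟨⋃₀ c, ⟨?_, ?_⟩, fun s hs => Set.subset_sUnion_of_mem hs⟩
    · exact Set.sUnion_subset fun s hs => (hc hs).1
    · rintro x ⟨s, hs, hxs⟩ y ⟨t, ht, hyt⟩ hxy
      rcases hchain.total hs ht with h | h
      · exact (hc ht).2 x (h hxs) y hyt hxy
      · exact (hc hs).2 x hxs y (h hyt) hxy
  have hMD : M ⊆ D := hMS.1
  have hMmaxA : IsMaxAntichainIn A M := by
    refine ⟨⟨fun x hx => (hMD hx).1, hMS.2⟩, ?_⟩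
    intro q hq
    obtain ⟨q', hq'A, hq'le, hq'p⟩ := hcon q hq
    have hq'D : q' ∈ D := ⟨hq'A, hq'p⟩
    by_cases hcomp : ∃ m ∈ M, CompatIn A q' m
    · obtain ⟨m, hm, hc⟩ := hcomp
      exact ⟨m, hm, compatIn_trans_le hq'le hc⟩
    · push_neg at hcomp
      exfalso
      have hq'M : q' ∉ M := fun h => hcomp q' h ⟨q', hq'A, le_refl _, le_refl _⟩
      have : insert q' M ∈ S := by
        constructor
        · exact Set.insert_subset hq'D hMD
        · rintro x (rfl | hx) y (rfl | hy) hxy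
          · exact absurd rfl hxy
          · exact hcomp y hy
          · exact fun hc => hcomp x hx (by obtain ⟨r, hr, h1, h2⟩ := hc; exact ⟨r, hr, h2, h1⟩)
          · exact hMS.2 x hx y hy hxy
      have := hMmax this (Set.subset_insert _ _)
      exact hq'M (this (Set.mem_insert _ _))
  obtain ⟨m, hm, r, _, hrp, hrm⟩ := (hA.2 M hMmaxA).2 p (Set.mem_univ p)
  exact (hMD hm).2 ⟨r, hrm, hrp⟩

/-- Incompatibility preservation together with existence of reducts implies regularity. -/
theorem isRegularSuborder_of_reducts {A : Set P}
    (h1 : ∀ p ∈ A, ∀ q ∈ A, ¬ CompatIn A p q → ¬ Compat p q)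
    (h2 : ∀ p : P, ∃ r ∈ A, ∀ q ∈ A, q ≤ r → Compat q p) :
    IsRegularSuborder A := by
  refine ⟨h1, fun M hM => ⟨⟨Set.subset_univ _, ?_⟩, ?_⟩⟩
  · intro x hx y hy hxy hc
    obtain ⟨r, _, hr1, hr2⟩ := hc
    exact h1 x (hM.1.1 hx) y (hM.1.1 hy) (hM.1.2 x hx y hy hxy) ⟨r, hr1, hr2⟩
  · intro p _
    obtain ⟨r, hrA, hred⟩ := h2 p
    obtain ⟨m, hm, t, htA, htr, htm⟩ := hM.2 r hrA
    obtain ⟨u, hu1, hu2⟩ := hred t htA htr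
    exact ⟨m, hm, ⟨u, Set.mem_univ u, hu2, hu1.trans htm⟩⟩

/-- The product of two regular suborders is a regular suborder of the product order. -/
theorem isRegularSuborder_prod {Q : Type u} [PartialOrder Q] {A : Set P} {B : Set Q}
    (hA : IsRegularSuborder A) (hB : IsRegularSuborder B) :
    IsRegularSuborder (A ×ˢ B) := by
  apply isRegularSuborder_of_reducts
  · rintro ⟨p, q⟩ hpq ⟨p', q'⟩ hpq' hnc ⟨⟨r1, r2⟩, hle1, hle2⟩
    rw [Set.mem_prod] at hpq hpq'
    rw [Prod.mk_le_mk] at hle1 hle2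
    have hcp : Compat p p' := ⟨r1, hle1.1, hle2.1⟩
    have hcq : Compat q q' := ⟨r2, hle1.2, hle2.2⟩
    have h1 : CompatIn A p p' := by
      by_contra h; exact hA.1 p hpq.1 p' hpq'.1 h hcp
    have h2 : CompatIn B q q' := by
      by_contra h; exact hB.1 q hpq.2 q' hpq'.2 h hcq
    obtain ⟨u, huA, hu1, hu2⟩ := h1
    obtain ⟨v, hvB, hv1, hv2⟩ := h2
    exact hnc ⟨(u, v), Set.mem_prod.mpr ⟨huA, hvB⟩,
      Prod.mk_le_mk.mpr ⟨hu1, hv1⟩, Prod.mk_le_mk.mpr ⟨hu2, hv2⟩⟩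
  · rintro ⟨p, q⟩
    obtain ⟨r1, hr1A, hred1⟩ := exists_reduct hA p
    obtain ⟨r2, hr2B, hred2⟩ := exists_reduct hB q
    refine ⟨(r1, r2), Set.mem_prod.mpr ⟨hr1A, hr2B⟩, ?_⟩
    rintro ⟨t1, t2⟩ htAB hle
    rw [Set.mem_prod] at htAB
    rw [Prod.mk_le_mk] at hle
    obtain ⟨u1, hu1, hu1'⟩ := hred1 t1 htAB.1 hle.1
    obtain ⟨u2, hu2, hu2'⟩ := hred2 t2 htAB.2 hle.2
    exact ⟨(u1, u2), Prod.mk_le_mk.mpr ⟨hu1, hu2⟩, Prod.mk_le_mk.mpr ⟨hu1', hu2'⟩⟩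

end Aux

/-- If `κ` is uncountable regular, `ν < κ ≤ λ`, `λ^ν = λ`, `μ^ν < κ` for all `μ < κ`,
and `F` is a normal filter on `P_κ(λ)` containing `Cl_κ(f)` for every
`f : (ν → λ) → λ`, then the product of two `F`-layered partial orders of size at most
`λ` is `F`-layered. -/
theorem fLayered_prod {V L : Type u} {Q : Type u} [PartialOrder Q] (κ : Cardinal.{u})
    (hreg : κ.IsRegular) (hunc : ℵ₀ < κ)
    (hV : #V < κ) (hkl : κ ≤ #L) (hexp : #L ^ #V = #L)
    (hpow : ∀ μ : Cardinal, μ < κ → μ ^ #V < κ)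
    (F : Set (Set (Set L))) (hF : IsNormalSetFilter κ L F)
    (hCl : ∀ f : (V → L) → L, ClSet κ f ∈ F)
    (hPcard : #P ≤ #L) (hQcard : #Q ≤ #L)
    (hP : FLayered κ F P) (hQ : FLayered κ F Q) :
    FLayered κ F (P × Q) := by
  -- `V` is nonempty
  have hVne : Nonempty V := by
    by_contra hne
    have : IsEmpty V := not_nonempty_iff.mp hne
    rw [mk_eq_zero V, power_zero] at hexp
    have h1 : (ℵ₀ : Cardinal) ≤ 1 := hexp ▸ (hreg.aleph0_le.trans hkl)
    exact absurd h1 (not_le.mpr one_lt_aleph0)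
  obtain ⟨v0⟩ := hVne
  -- closure under unary functions is in `F`
  have hUnary : ∀ g : L → L, {a : Set L | #a < κ ∧ ∀ x ∈ a, g x ∈ a} ∈ F := by
    intro g
    refine hF.superset _ (hCl fun t => g (t v0)) _ (fun a ha => ha.1) ?_
    rintro a ⟨ha1, ha2⟩
    refine ⟨ha1, fun x hx => ?_⟩
    have := ha2 (fun _ => x) (by rintro y ⟨_, rfl⟩; exact hx)
    exact this
  -- closure under binary functions is in `F`
  have hBinary : ∀ g : L → L → L,
      {a : Set L | #a < κ ∧ ∀ x ∈ a, ∀ y ∈ a, g x y ∈ a} ∈ F := by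
    intro g
    have := hF.diag (fun x => {a : Set L | #a < κ ∧ ∀ y ∈ a, g x y ∈ a})
      (fun x => hUnary (g x))
    refine hF.superset _ this _ (fun a ha => ha.1) ?_
    rintro a ⟨ha1, ha2⟩
    exact ⟨ha1, fun x hx y hy => (ha2 x hx).2 y hy⟩
  intro s hs
  -- the coordinate surjections
  set s₁ : L → P := fun x => (s x).1 with hs₁def
  set s₂ : L → Q := fun x => (s x).2 with hs₂def
  have hs₁ : Function.Surjective s₁ := fun p => by
    obtain ⟨q⟩ : Nonempty Q := by
      have : Nonempty L := by
        rw [← Cardinal.mk_ne_zero_iff]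
        exact ne_of_gt (lt_of_lt_of_le (aleph0_pos.trans hunc) hkl)
      obtain ⟨x⟩ := this; exact ⟨(s x).2⟩
    obtain ⟨x, hx⟩ := hs (p, q)
    exact ⟨x, by rw [hs₁def]; simp [hx]⟩
  have hs₂ : Function.Surjective s₂ := fun q => by
    obtain ⟨p⟩ : Nonempty P := by
      have : Nonempty L := by
        rw [← Cardinal.mk_ne_zero_iff]
        exact ne_of_gt (lt_of_lt_of_le (aleph0_pos.trans hunc) hkl)
      obtain ⟨x⟩ := this; exact ⟨(s x).1⟩
    obtain ⟨x, hx⟩ := hs (p, q)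
    exact ⟨x, by rw [hs₂def]; simp [hx]⟩
  -- a pairing function
  have hg : ∀ x y : L, ∃ z : L, s z = ((s x).1, (s y).2) := fun x y => hs _
  choose g hgspec using hg
  have hG1 := hP s₁ hs₁
  have hG2 := hQ s₂ hs₂
  have hD := hBinary g
  have hmem := hF.inter _ (hF.inter _ hG1 _ hG2) _ hD
  refine hF.superset _ hmem _ (fun a ha => ha.1) ?_
  rintro a ⟨⟨⟨ha1, hreg1, -⟩, ⟨-, hreg2, -⟩⟩, ⟨-, hcl⟩⟩
  -- the image is a rectangle
  have hrect : s '' a = (s₁ '' a) ×ˢ (s₂ '' a) := by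
    apply Set.Subset.antisymm
    · rintro z ⟨x, hx, rfl⟩
      exact Set.mem_prod.mpr ⟨⟨x, hx, rfl⟩, ⟨x, hx, rfl⟩⟩
    · rintro ⟨p, q⟩ hpq
      rw [Set.mem_prod] at hpq
      obtain ⟨x, hx, hxp⟩ := hpq.1
      obtain ⟨y, hy, hyq⟩ := hpq.2
      refine ⟨g x y, hcl x hx y hy, ?_⟩
      rw [hgspec x y]; exact Prod.ext hxp hyq
  refine ⟨ha1, ?_, lt_of_le_of_lt Cardinal.mk_image_le ha1⟩
  rw [hrect]
  exact isRegularSuborder_prod hreg1 hreg2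
end

section
/- If F is a normal filter on P_κ(λ) and P is an F-layered partial order of cardinality at most λ, then P satisfies the κ-chain condition. -/
open Cardinal

universe u

variable {P : Type u} [PartialOrder P]

private lemma compatIn_univ_iff {p q : P} : CompatIn (Set.univ : Set P) p q ↔ Compat p q := by
  constructor
  · rintro ⟨r, -, h⟩; exact ⟨r, h⟩
  · rintro ⟨r, h⟩; exact ⟨r, trivial, h⟩

private lemma compat_symm {p q : P} : Compat p q → Compat q p := by
  rintro ⟨r, h1, h2⟩; exact ⟨r, h2, h1⟩

/-- If `F` is a normal filter on `P_κ(λ)` and `P` is an `F`-layered partial order of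
cardinality at most `λ`, then `P` satisfies the `κ`-chain condition. -/
theorem ccc_of_fLayered {L : Type u} (κ : Cardinal.{u})
    (hreg : κ.IsRegular) (hunc : ℵ₀ < κ) (hkl : κ ≤ #L)
    (F : Set (Set (Set L))) (hF : IsNormalSetFilter κ L F)
    (hPcard : #P ≤ #L) (hlay : FLayered κ F P) :
    CCC P κ := by
  intro A hA
  by_contra hlt
  push_neg at hlt
  -- extend A to a maximal antichain M
  obtain ⟨M, hAM, hMa, hMmax⟩ : ∃ M, A ⊆ M ∧ IsAntichainIn (Set.univ : Set P) M ∧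
      ∀ B, IsAntichainIn (Set.univ : Set P) B → M ⊆ B → B = M := by
    obtain ⟨M, hAM, hM⟩ := zorn_subset_nonempty {B : Set P | IsAntichainIn Set.univ B}
      (fun c hc hchain _ => by
        refine ⟨⋃₀ c, ⟨fun p _ => trivial, ?_⟩, fun s hs => Set.subset_sUnion_of_mem hs⟩
        rintro p ⟨B1, hB1, hp⟩ q ⟨B2, hB2, hq⟩ hne
        rcases hchain.total hB1 hB2 with h12 | h21
        · exact (hc hB2).2 p (h12 hp) q hq hne
        · exact (hc hB1).2 p hp q (h21 hq) hne) A hA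
    exact ⟨M, hAM, hM.1, fun B hB hMB => (hM.2 hB hMB).antisymm hMB⟩
  have hκM : κ ≤ #M := hlt.trans (Cardinal.mk_le_mk_of_subset hAM)
  -- M is a maximal antichain of univ
  have hMmax' : IsMaxAntichainIn (Set.univ : Set P) M := by
    refine ⟨hMa, fun q _ => ?_⟩
    by_contra hcon
    push_neg at hcon
    have hqM : q ∉ M := fun hq => hcon q hq ⟨q, trivial, le_refl q, le_refl q⟩
    have : IsAntichainIn (Set.univ : Set P) (insert q M) := by
      refine ⟨fun p _ => trivial, ?_⟩
      rintro p (rfl | hp) r (rfl | hr) hne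
      · exact absurd rfl hne
      · exact hcon r hr
      · intro h
        exact hcon p hp (compatIn_univ_iff.mpr (compat_symm (compatIn_univ_iff.mp h)))
      · exact hMa.2 p hp r hr hne
    have := hMmax _ this (Set.subset_insert q M)
    exact hqM (this ▸ Set.mem_insert q M)
  -- get a surjection from L onto P
  have hMne : M.Nonempty := by
    have h0 : (#↥M) ≠ 0 := by
      intro h
      rw [h] at hκM
      exact (Cardinal.aleph0_pos.trans_le hreg.aleph0_le).not_ge hκM
    obtain ⟨m⟩ := Cardinal.mk_ne_zero_iff.mp h0
    exact ⟨m, m.2⟩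
  obtain ⟨p0, hp0⟩ := hMne
  haveI : Nonempty P := ⟨p0⟩
  obtain ⟨f⟩ := Cardinal.le_def P L |>.mp hPcard
  set s : L → P := Function.invFun f with hs_def
  have hs : Function.Surjective s := Function.invFun_surjective f.injective
  have hG := hlay s hs
  -- choose compatibility witnesses
  have hx : ∀ x : L, ∃ y z : L, s z ∈ M ∧ s y ≤ s x ∧ s y ≤ s z := by
    intro x
    obtain ⟨p, hp, r, -, hr1, hr2⟩ := hMmax'.2 (s x) trivial
    obtain ⟨y, hy⟩ := hs r
    obtain ⟨z, hz⟩ := hs p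
    exact ⟨y, z, by rw [hz]; exact hp, by rw [hy]; exact hr1, by rw [hy, hz]; exact hr2⟩
  choose y z hzM hy1 hy2 using hx
  set Aseq : L → Set (Set L) :=
    fun x => {a ∈ Pklt κ L | y x ∈ a} ∩ {a ∈ Pklt κ L | z x ∈ a} with hAseq_def
  have hAseqF : ∀ x, Aseq x ∈ F := fun x =>
    hF.inter _ (hF.fine (y x)) _ (hF.fine (z x))
  have hD := hF.diag Aseq hAseqF
  have hGD := hF.inter _ hG _ hD
  have hne : ({a ∈ Pklt κ L | IsRegularSuborder (s '' a) ∧ #(s '' a) < κ} ∩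
      {a ∈ Pklt κ L | ∀ x ∈ a, a ∈ Aseq x}).Nonempty := by
    rw [Set.nonempty_iff_ne_empty]
    rintro h
    rw [h] at hGD
    exact hF.empty_not hGD
  obtain ⟨a, ⟨-, hreg', hcard⟩, -, hdiag⟩ := hne
  set Q : Set P := s '' a with hQ_def
  -- M ∩ Q is a maximal antichain of Q
  have hmaxQ : IsMaxAntichainIn Q (M ∩ Q) := by
    constructor
    · refine ⟨Set.inter_subset_right, ?_⟩
      rintro p ⟨hpM, -⟩ q ⟨hqM, -⟩ hne hc
      obtain ⟨r, -, hr⟩ := hc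
      exact hMa.2 p hpM q hqM hne ⟨r, trivial, hr⟩
    · rintro q ⟨x, hxa, rfl⟩
      obtain ⟨⟨-, hya⟩, -, hza⟩ := hdiag x hxa
      exact ⟨s (z x), ⟨hzM x, ⟨z x, hza, rfl⟩⟩, ⟨s (y x), ⟨y x, hya, rfl⟩, hy1 x, hy2 x⟩⟩
  have hmaxU : IsMaxAntichainIn (Set.univ : Set P) (M ∩ Q) := hreg'.2 _ hmaxQ
  -- find p ∈ M \ Q
  have : ∃ p ∈ M, p ∉ Q := by
    by_contra h
    push_neg at h
    exact absurd (hκM.trans (Cardinal.mk_le_mk_of_subset h)) (not_le.mpr hcard)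
  obtain ⟨p, hpM, hpQ⟩ := this
  obtain ⟨a', ⟨ha'M, ha'Q⟩, hcompat⟩ := hmaxU.2 p trivial
  have hne' : p ≠ a' := fun h => hpQ (h ▸ ha'Q)
  exact hMa.2 p hpM a' ha'M hne' hcompat
end
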